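/- Let G be a connected graph, let u,v,w be vertices with {u,v} ∈ E(G) and {u,w} ∉ E(G), and let H = G − {u,v} + {u,w}. Suppose x is a unit eigenvector for λ_1(B_α(G)) with x_u > 0. If either (i) 0 ≤ α < 1/2 and x_w ≤ x_v < 0, or (ii) 1/2 < α ≤ 1 and 0 < x_v ≤ x_w, then λ_1(B_α(H)) > λ_1(B_α(G)). -/

import Mathlib

/-!
Since `B_α = α A + (1 - α)(D - A) = (1 - α) D + (2α - 1) A` and `D` is read off `A`, `B_α` is
linear in the adjacency matrix, so `B_α(H) = B_α(G) + Δ` with `Δ` the difference of the `B_α`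
matrices of the single edges `uw` and `uv`. By the Rayleigh principle
`λ₁(H) ≥ xᵀ B_α(H) x / xᵀx = λ₁(G) + xᵀ Δ x / xᵀx`, and
`xᵀ Δ x = (x_w - x_v)((1 - α)(x_w + x_v) + 2(2α - 1) x_u) ≥ 0` in both cases. Equality would make
`x` an eigenvector of `B_α(H)` for the same eigenvalue, forcing `Δ x = 0`; but
`(Δ x)_w = (1 - α) x_w + (2α - 1) x_u ≠ 0`.
-/

open Matrix

/-- The adjacency matrix of `G` over `ℝ`. -/
noncomputable def adjM {V : Type*} [Fintype V] [DecidableEq V]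
    (G : SimpleGraph V) [DecidableRel G.Adj] : Matrix V V ℝ :=
  G.adjMatrix ℝ

/-- The diagonal degree matrix of `G`. -/
noncomputable def degM {V : Type*} [Fintype V] [DecidableEq V]
    (G : SimpleGraph V) [DecidableRel G.Adj] : Matrix V V ℝ :=
  Matrix.diagonal fun v => (G.degree v : ℝ)

/-- The Laplacian matrix `L(G) = D(G) - A(G)`. -/
noncomputable def lapM {V : Type*} [Fintype V] [DecidableEq V]
    (G : SimpleGraph V) [DecidableRel G.Adj] : Matrix V V ℝ :=
  degM G - adjM G

/-- The matrix `B_α(G) = α A(G) + (1-α) L(G)`. -/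
noncomputable def Balpha {V : Type*} [Fintype V] [DecidableEq V]
    (G : SimpleGraph V) [DecidableRel G.Adj] (α : ℝ) : Matrix V V ℝ :=
  α • adjM G + (1 - α) • lapM G

namespace Matrix

variable {n : Type*} [Fintype n] [DecidableEq n] {M : Matrix n n ℝ}

theorem IsHermitian.posSemidef_sSup_spectrum_smul_one_sub (hM : M.IsHermitian) :
    (sSup (spectrum ℝ M) • (1 : Matrix n n ℝ) - M).PosSemidef := by
  rw [posSemidef_iff_isHermitian_and_spectrum_nonneg]
  refine ⟨(isHermitian_one.smul (IsSelfAdjoint.all _)).sub hM, ?_⟩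
  rw [← Algebra.algebraMap_eq_smul_one, ← spectrum.singleton_sub_eq]
  rintro _ ⟨_, rfl, μ, hμ, rfl⟩
  exact sub_nonneg.mpr (le_csSup M.finite_real_spectrum.bddAbove hμ)

theorem IsHermitian.dotProduct_mulVec_le (hM : M.IsHermitian) (x : n → ℝ) :
    x ⬝ᵥ (M *ᵥ x) ≤ sSup (spectrum ℝ M) * (x ⬝ᵥ x) := by
  have h := hM.posSemidef_sSup_spectrum_smul_one_sub.dotProduct_mulVec_nonneg x
  simp only [star_trivial, sub_mulVec, smul_mulVec, one_mulVec, dotProduct_sub,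
    dotProduct_smul, smul_eq_mul] at h
  linarith

theorem IsHermitian.mulVec_eq_of_dotProduct_mulVec_eq (hM : M.IsHermitian) {x : n → ℝ}
    (h : x ⬝ᵥ (M *ᵥ x) = sSup (spectrum ℝ M) * (x ⬝ᵥ x)) :
    M *ᵥ x = sSup (spectrum ℝ M) • x := by
  have h0 := (hM.posSemidef_sSup_spectrum_smul_one_sub.dotProduct_mulVec_zero_iff x).mp (by
    simp only [star_trivial, sub_mulVec, smul_mulVec, one_mulVec, dotProduct_sub,
      dotProduct_smul, smul_eq_mul]
    linarith)
  rw [sub_mulVec, smul_mulVec, one_mulVec, sub_eq_zero] at h0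
  exact h0.symm

theorem sSup_spectrum_lt_sSup_spectrum_add {Δ : Matrix n n ℝ} {x : n → ℝ}
    (hMΔ : (M + Δ).IsHermitian) (hx : M *ᵥ x = sSup (spectrum ℝ M) • x)
    (hΔ : 0 ≤ x ⬝ᵥ (Δ *ᵥ x)) (hΔx : Δ *ᵥ x ≠ 0) :
    sSup (spectrum ℝ M) < sSup (spectrum ℝ (M + Δ)) := by
  have hxx : 0 < x ⬝ᵥ x := by
    refine lt_of_le_of_ne (Finset.sum_nonneg fun i _ => mul_self_nonneg (x i))
      (Ne.symm fun h => hΔx ?_)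
    rw [dotProduct_self_eq_zero.mp h, mulVec_zero]
  have hform : x ⬝ᵥ ((M + Δ) *ᵥ x) = sSup (spectrum ℝ M) * (x ⬝ᵥ x) + x ⬝ᵥ (Δ *ᵥ x) := by
    rw [add_mulVec, dotProduct_add, hx, dotProduct_smul, smul_eq_mul]
  have hray := hMΔ.dotProduct_mulVec_le x
  refine lt_of_le_of_ne (le_of_mul_le_mul_right (by linarith) hxx) fun hlμ => hΔx ?_
  rw [← hlμ] at hray
  have heig := hMΔ.mulVec_eq_of_dotProduct_mulVec_eq (by rw [← hlμ]; linarith)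
  rw [add_mulVec, hx, ← hlμ] at heig
  exact add_eq_left.mp heig

end Matrix

section EdgeMove

variable {V : Type*} [Fintype V] [DecidableEq V]

noncomputable def balphaOfAdj (A : Matrix V V ℝ) (α : ℝ) : Matrix V V ℝ :=
  (1 - α) • diagonal (A *ᵥ 1) + (2 * α - 1) • A

theorem balphaOfAdj_add (A B : Matrix V V ℝ) (α : ℝ) :
    balphaOfAdj (A + B) α = balphaOfAdj A α + balphaOfAdj B α := by
  have hdiag := map_add (diagonalAddMonoidHom V ℝ) (A *ᵥ 1) (B *ᵥ 1)
  simp only [diagonalAddMonoidHom_apply] at hdiag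
  unfold balphaOfAdj
  rw [add_mulVec, hdiag]
  module

theorem balphaOfAdj_sub (A B : Matrix V V ℝ) (α : ℝ) :
    balphaOfAdj (A - B) α = balphaOfAdj A α - balphaOfAdj B α := by
  have hdiag := map_sub (diagonalAddMonoidHom V ℝ) (A *ᵥ 1) (B *ᵥ 1)
  simp only [diagonalAddMonoidHom_apply] at hdiag
  unfold balphaOfAdj
  rw [sub_mulVec, hdiag]
  module

theorem Balpha_eq_balphaOfAdj (G : SimpleGraph V) [DecidableRel G.Adj] (α : ℝ) :
    Balpha G α = balphaOfAdj (adjM G) α := by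
  have hdeg : degM G = diagonal (adjM G *ᵥ 1) := by
    ext a b
    simp [degM, adjM, diagonal_apply]
  rw [Balpha, balphaOfAdj, lapM, ← hdeg]
  module

theorem isHermitian_Balpha (G : SimpleGraph V) [DecidableRel G.Adj] (α : ℝ) :
    (Balpha G α).IsHermitian := by
  have hA : (adjM G).IsHermitian := G.isSymm_adjMatrix
  exact ((hA.smul (IsSelfAdjoint.all α)).add
    (((isHermitian_diagonal _).sub hA).smul (IsSelfAdjoint.all _)))

noncomputable def edgeMatrix (a b : V) : Matrix V V ℝ :=
  single a b 1 + single b a 1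

theorem balphaOfAdj_edgeMatrix_mulVec (a b : V) (α : ℝ) (x : V → ℝ) :
    balphaOfAdj (edgeMatrix a b) α *ᵥ x =
      Pi.single a ((1 - α) * x a + (2 * α - 1) * x b) +
        Pi.single b ((1 - α) * x b + (2 * α - 1) * x a) := by
  ext i
  rcases eq_or_ne i a with rfl | hia <;> rcases eq_or_ne i b with rfl | hib <;>
    simp [balphaOfAdj, edgeMatrix, add_mulVec, single_mulVec, smul_mulVec, mulVec_diagonal, *]
  ring

theorem adjM_eq_of_edgeSet_eq {G H : SimpleGraph V} [DecidableRel G.Adj] [DecidableRel H.Adj]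
    {u v w : V} (huv : G.Adj u v) (hnuw : ¬ G.Adj u w) (huw : u ≠ w)
    (hH : H.edgeSet = (G.edgeSet \ {s(u, v)}) ∪ {s(u, w)}) :
    adjM H = adjM G + (edgeMatrix u w - edgeMatrix u v) := by
  ext a b
  have hadj : H.Adj a b ↔ G.Adj a b ∧ s(a, b) ≠ s(u, v) ∨ s(a, b) = s(u, w) := by
    rw [← SimpleGraph.mem_edgeSet, hH]
    simp [or_comm]
  have huv' : u ≠ v := G.ne_of_adj huv
  simp only [adjM, edgeMatrix, Matrix.add_apply, Matrix.sub_apply, single_apply,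
    SimpleGraph.adjMatrix_apply, hadj, Ne, Sym2.eq_iff]
  split_ifs <;> grind [G.adj_symm]

theorem Balpha_eq_add_of_edgeSet_eq {G H : SimpleGraph V} [DecidableRel G.Adj]
    [DecidableRel H.Adj] {u v w : V} (huv : G.Adj u v) (hnuw : ¬ G.Adj u w) (huw : u ≠ w)
    (hH : H.edgeSet = (G.edgeSet \ {s(u, v)}) ∪ {s(u, w)}) (α : ℝ) :
    Balpha H α = Balpha G α + balphaOfAdj (edgeMatrix u w - edgeMatrix u v) α := by
  rw [Balpha_eq_balphaOfAdj, Balpha_eq_balphaOfAdj, adjM_eq_of_edgeSet_eq huv hnuw huw hH,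
    balphaOfAdj_add]

theorem balphaOfAdj_edgeMatrix_sub_mulVec (u v w : V) (α : ℝ) (x : V → ℝ) :
    balphaOfAdj (edgeMatrix u w - edgeMatrix u v) α *ᵥ x =
      Pi.single u ((2 * α - 1) * (x w - x v)) +
        Pi.single w ((1 - α) * x w + (2 * α - 1) * x u) -
        Pi.single v ((1 - α) * x v + (2 * α - 1) * x u) := by
  rw [balphaOfAdj_sub, sub_mulVec, balphaOfAdj_edgeMatrix_mulVec, balphaOfAdj_edgeMatrix_mulVec]
  ext i
  simp only [Pi.add_apply, Pi.sub_apply, Pi.single_apply]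
  split_ifs <;> ring

end EdgeMove

theorem stmt_19_general {V : Type*} [Fintype V] [DecidableEq V]
    (G : SimpleGraph V) [DecidableRel G.Adj]
    (α : ℝ) (hα1 : α ≤ 1)
    (u v w : V) (huw : u ≠ w)
    (huv : s(u, v) ∈ G.edgeSet) (hnuw : s(u, w) ∉ G.edgeSet)
    (H : SimpleGraph V) [DecidableRel H.Adj]
    (hH : H.edgeSet = (G.edgeSet \ {s(u, v)}) ∪ {s(u, w)})
    (x : V → ℝ)
    (heig : Balpha G α *ᵥ x = sSup (spectrum ℝ (Balpha G α)) • x)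
    (hxu : 0 < x u)
    (hcase : (α < 1/2 ∧ x w ≤ x v ∧ x v < 0) ∨
             (1/2 < α ∧ 0 < x v ∧ x v ≤ x w)) :
    sSup (spectrum ℝ (Balpha G α)) < sSup (spectrum ℝ (Balpha H α)) := by
  have hvw : v ≠ w := by rintro rfl; exact hnuw huv
  set Δ := balphaOfAdj (edgeMatrix u w - edgeMatrix u v) α
  have hBH : Balpha H α = Balpha G α + Δ := Balpha_eq_add_of_edgeSet_eq huv hnuw huw hH α
  have hquad : x ⬝ᵥ (Δ *ᵥ x) =
      (x w - x v) * ((1 - α) * (x w + x v) + 2 * (2 * α - 1) * x u) := by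
    rw [balphaOfAdj_edgeMatrix_sub_mulVec, dotProduct_sub, dotProduct_add, dotProduct_single,
      dotProduct_single, dotProduct_single]
    ring
  have hΔxw : (Δ *ᵥ x) w = (1 - α) * x w + (2 * α - 1) * x u := by
    simp [Δ, balphaOfAdj_edgeMatrix_sub_mulVec, huw.symm, hvw.symm]
  rw [hBH]
  refine sSup_spectrum_lt_sSup_spectrum_add (hBH ▸ isHermitian_Balpha H α) heig ?_ ?_
  · rw [hquad]
    rcases hcase with ⟨hα, hxwv, hxv⟩ | ⟨hα, hxv, hxvw⟩
    · exact mul_nonneg_of_nonpos_of_nonpos (by linarith) (by nlinarith)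
    · exact mul_nonneg (by linarith) (by nlinarith)
  · intro hΔx
    have hw := congrFun hΔx w
    rw [hΔxw, Pi.zero_apply] at hw
    rcases hcase with ⟨hα, hxwv, hxv⟩ | ⟨hα, hxv, hxvw⟩ <;> nlinarith

theorem stmt_19 {V : Type*} [Fintype V] [DecidableEq V]
    (G : SimpleGraph V) [DecidableRel G.Adj] (hconn : G.Connected)
    (α : ℝ) (hα0 : 0 ≤ α) (hα1 : α ≤ 1)
    (u v w : V) (huw : u ≠ w)
    (huv : s(u, v) ∈ G.edgeSet) (hnuw : s(u, w) ∉ G.edgeSet)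
    (H : SimpleGraph V) [DecidableRel H.Adj]
    (hH : H.edgeSet = (G.edgeSet \ {s(u, v)}) ∪ {s(u, w)})
    (x : V → ℝ) (hunit : x ⬝ᵥ x = 1)
    (heig : Balpha G α *ᵥ x = sSup (spectrum ℝ (Balpha G α)) • x)
    (hxu : 0 < x u)
    (hcase : (α < 1/2 ∧ x w ≤ x v ∧ x v < 0) ∨
             (1/2 < α ∧ 0 < x v ∧ x v ≤ x w)) :
    sSup (spectrum ℝ (Balpha G α)) < sSup (spectrum ℝ (Balpha H α)) :=
  stmt_19_general G α hα1 u v w huw huv hnuw H hH x heig hxu hcase
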